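/- For a unit vector p ∈ S^{m−1} and t ∈ [0,1), the image of the closed hemisphere H_p = {y ∈ S^{m−1} : y·p ≤ 0} under the Möbius transformation T_{tp} equals the spherical cap {y ∈ S^{m−1} : y·p ≤ 2t/(1+t²)}. -/

import Mathlib

open scoped RealInnerProductSpace

/-- The Möbius transformation `T_x` of the closed unit ball in `ℝ^m`,
`T_x(y) = ((1 + 2x·y + |y|²)x + (1 − |x|²)y) / (1 + 2x·y + |x|²|y|²)`. -/
noncomputable def mobiusT {m : ℕ} (x y : EuclideanSpace ℝ (Fin m)) :
    EuclideanSpace ℝ (Fin m) :=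
  (1 + 2 * ⟪x, y⟫ + ‖x‖ ^ 2 * ‖y‖ ^ 2)⁻¹ •
    ((1 + 2 * ⟪x, y⟫ + ‖y‖ ^ 2) • x + (1 - ‖x‖ ^ 2) • y)

/-!
For a unit vector `p`, `T_{up}` maps a unit vector `y` of height `s = ⟪y, p⟫` to the unit vector
of height `(2u + s(1 + u²)) / (1 + 2us + u²)`, a strictly increasing function of `s` on `[-1, 1]`
that sends `0` to `2u / (1 + u²)`. Since `T_{-up}` inverts `T_{up}` on the sphere, the hemisphere
`s ≤ 0` is mapped onto the cap of heights at most `2u / (1 + u²)`.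
-/

section UnitVectors

variable {E : Type*} [NormedAddCommGroup E] [InnerProductSpace ℝ E] {p y : E}

lemma real_inner_smul_add_smul_left_of_norm_eq_one (hp : ‖p‖ = 1) (α β : ℝ) :
    ⟪α • p + β • y, p⟫ = α + β * ⟪y, p⟫ := by
  rw [inner_add_left, real_inner_smul_left, real_inner_smul_left, real_inner_self_eq_norm_sq, hp]
  ring

lemma norm_smul_add_smul_sq_of_norm_eq_one (hp : ‖p‖ = 1) (hy : ‖y‖ = 1) (α β : ℝ) :
    ‖α • p + β • y‖ ^ 2 = α ^ 2 + 2 * α * β * ⟪y, p⟫ + β ^ 2 := by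
  rw [norm_add_sq_real, real_inner_smul_left, real_inner_smul_right, real_inner_comm,
    norm_smul, norm_smul, hp, hy, Real.norm_eq_abs, Real.norm_eq_abs, mul_one, mul_one,
    sq_abs, sq_abs]
  ring

end UnitVectors

lemma one_add_two_mul_mul_add_sq_pos {u s : ℝ} (hu : |u| < 1) (hs : s ∈ Set.Icc (-1 : ℝ) 1) :
    0 < 1 + 2 * u * s + u ^ 2 := by
  have hus : |u * s| ≤ |u| := by
    rw [abs_mul]
    exact mul_le_of_le_one_right (abs_nonneg u) (abs_le.2 hs)
  nlinarith [neg_abs_le (u * s), sq_abs u, abs_nonneg u]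

/-- The height `⟪T_{up} y, p⟫` of the image of a unit vector `y` of height `s = ⟪y, p⟫`. -/
noncomputable def mobiusHeight (u s : ℝ) : ℝ :=
  (2 * u + s * (1 + u ^ 2)) / (1 + 2 * u * s + u ^ 2)

lemma mobiusHeight_zero (u : ℝ) : mobiusHeight u 0 = 2 * u / (1 + u ^ 2) := by
  simp [mobiusHeight]

lemma strictMonoOn_mobiusHeight {u : ℝ} (hu : |u| < 1) :
    StrictMonoOn (mobiusHeight u) (Set.Icc (-1) 1) := by
  intro s hs s' hs' hss'
  have hu2 : u ^ 2 < 1 := by nlinarith [sq_abs u, abs_nonneg u]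
  rw [mobiusHeight, mobiusHeight, div_lt_div_iff₀ (one_add_two_mul_mul_add_sq_pos hu hs)
    (one_add_two_mul_mul_add_sq_pos hu hs')]
  -- the cross difference factors as `(s' - s) (1 - u²)²`
  nlinarith [mul_pos (sub_pos.2 hss') (pow_pos (sub_pos.2 hu2) 2)]

section Mobius

variable {m : ℕ} {p y : EuclideanSpace ℝ (Fin m)} {u : ℝ}

lemma mobiusT_smul_eq (hp : ‖p‖ = 1) (hy : ‖y‖ = 1) :
    mobiusT (u • p) y
      = (2 * u * (1 + u * ⟪y, p⟫) / (1 + 2 * u * ⟪y, p⟫ + u ^ 2)) • p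
        + ((1 - u ^ 2) / (1 + 2 * u * ⟪y, p⟫ + u ^ 2)) • y := by
  rw [mobiusT, real_inner_smul_left, real_inner_comm, norm_smul, hp, hy, Real.norm_eq_abs,
    mul_one, sq_abs, one_pow, mul_one]
  match_scalars <;> ring

lemma norm_mobiusT_smul (hp : ‖p‖ = 1) (hy : ‖y‖ = 1) (hu : |u| < 1) :
    ‖mobiusT (u • p) y‖ = 1 := by
  have hD := one_add_two_mul_mul_add_sq_pos hu (real_inner_mem_Icc_of_norm_eq_one hy hp)
  have hsq : ‖mobiusT (u • p) y‖ ^ 2 = 1 := by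
    rw [mobiusT_smul_eq hp hy, norm_smul_add_smul_sq_of_norm_eq_one hp hy]
    field_simp
    ring
  exact (pow_eq_one_iff_of_nonneg (norm_nonneg _) two_ne_zero).1 hsq

lemma inner_mobiusT_smul (hp : ‖p‖ = 1) (hy : ‖y‖ = 1) (hu : |u| < 1) :
    ⟪mobiusT (u • p) y, p⟫ = mobiusHeight u ⟪y, p⟫ := by
  have hD := one_add_two_mul_mul_add_sq_pos hu (real_inner_mem_Icc_of_norm_eq_one hy hp)
  rw [mobiusT_smul_eq hp hy, real_inner_smul_add_smul_left_of_norm_eq_one hp, mobiusHeight]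
  field_simp
  ring

lemma mobiusT_neg_smul_mobiusT_smul (hp : ‖p‖ = 1) (hy : ‖y‖ = 1) (hu : |u| < 1) :
    mobiusT ((-u) • p) (mobiusT (u • p) y) = y := by
  have hD := one_add_two_mul_mul_add_sq_pos hu (real_inner_mem_Icc_of_norm_eq_one hy hp)
  have hu2 : 1 - u ^ 2 ≠ 0 := by nlinarith [sq_abs u, abs_nonneg u]
  have hD' : 1 + 2 * (-u) * mobiusHeight u ⟪y, p⟫ + (-u) ^ 2
      = (1 - u ^ 2) ^ 2 / (1 + 2 * u * ⟪y, p⟫ + u ^ 2) := by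
    rw [mobiusHeight]
    field_simp
    ring
  rw [mobiusT_smul_eq hp (norm_mobiusT_smul hp hy hu), inner_mobiusT_smul hp hy hu, hD',
    mobiusT_smul_eq hp hy, mobiusHeight]
  generalize hDdef : 1 + 2 * u * ⟪y, p⟫ + u ^ 2 = D at hD ⊢
  match_scalars <;> field_simp
  subst hDdef
  ring

end Mobius

/-- The image of the closed hemisphere `H_p = {y ∈ S^{m−1} : y·p ≤ 0}` under the
Möbius transformation `T_{tp}` equals the spherical cap
`{y ∈ S^{m−1} : y·p ≤ 2t/(1+t²)}`. -/
theorem mobius_image_hemisphere_eq_cap (m : ℕ) (p : EuclideanSpace ℝ (Fin m))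
    (hp : ‖p‖ = 1) (t : ℝ) (ht0 : 0 ≤ t) (ht1 : t < 1) :
    mobiusT (t • p) '' {y : EuclideanSpace ℝ (Fin m) | ‖y‖ = 1 ∧ ⟪y, p⟫ ≤ 0}
      = {y : EuclideanSpace ℝ (Fin m) | ‖y‖ = 1 ∧ ⟪y, p⟫ ≤ 2 * t / (1 + t ^ 2)} := by
  have ht : |t| < 1 := by rwa [abs_of_nonneg ht0]
  have height_le_iff {y : EuclideanSpace ℝ (Fin m)} (hy : ‖y‖ = 1) :
      ⟪mobiusT (t • p) y, p⟫ ≤ 2 * t / (1 + t ^ 2) ↔ ⟪y, p⟫ ≤ 0 := by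
    rw [inner_mobiusT_smul hp hy ht, ← mobiusHeight_zero]
    exact (strictMonoOn_mobiusHeight ht).le_iff_le (real_inner_mem_Icc_of_norm_eq_one hy hp)
      ⟨by norm_num, by norm_num⟩
  ext z
  constructor
  · rintro ⟨y, ⟨hy, hyp⟩, rfl⟩
    exact ⟨norm_mobiusT_smul hp hy ht, (height_le_iff hy).2 hyp⟩
  · rintro ⟨hz, hzp⟩
    have hnt : |-t| < 1 := by rwa [abs_neg]
    have hy := norm_mobiusT_smul hp hz hnt
    have hzy : mobiusT (t • p) (mobiusT ((-t) • p) z) = z := by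
      simpa using mobiusT_neg_smul_mobiusT_smul hp hz hnt
    rw [← hzy] at hzp
    exact ⟨_, ⟨hy, (height_le_iff hy).1 hzp⟩, hzy⟩
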